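/- arXiv:1808.06904 — 3 statements merged into one kernel-verified Lean document; each statement's English description precedes it below -/
import Mathlib

section
/- For two Hermitian matrices A₁, A₂ of size n (case d = 2), conditions (f) and (a) are equivalent: A₁ and A₂ are linearly independent over ℝ if and only if there exists V ∈ ℂⁿ with A₁V, A₂V linearly independent over ℂ. -/
/-!
If `A₁V` and `A₂V` are dependent for every `V`, the two maps are "locally linearly dependent":
either they are dependent over `ℂ`, or (after subtracting a multiple of `A₁` from `A₂` to create
a common kernel vector) both ranges lie on one line `ℂ ∙ u`. A Hermitian matrix with range in
`ℂ ∙ u` is a multiple of `u uᴴ`, so in either case `A₁, A₂` are dependent over `ℂ`. For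
self-adjoint elements a complex relation `s A₁ + t A₂ = 0` is preserved by taking adjoints, so
the real and imaginary parts of `(s, t)` give real relations, one of which is nontrivial.
The converse is evaluation at `V`.
-/

open Matrix Submodule

section LocallyDependent

variable {K M N : Type*} [Field K] [AddCommGroup M] [Module K M] [AddCommGroup N] [Module K N]

theorem exists_smul_eq_of_not_linearIndependent_pair {x y : N}
    (h : ¬ LinearIndependent K ![x, y]) (hy : y ≠ 0) : ∃ a : K, a • y = x := by
  simpa [LinearIndependent.pair_symm_iff, LinearIndependent.pair_iff' hy] using h

theorem not_linearIndependent_pair_smul (a b : K) (x : N) :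
    ¬ LinearIndependent K ![a • x, b • x] := by
  rw [LinearIndependent.pair_iff]
  push Not
  by_cases ha : a = 0
  · exact ⟨1, 0, by simp [ha], by simp⟩
  · exact ⟨b, -a, by rw [smul_smul, smul_smul, mul_comm]; module, fun _ => neg_ne_zero.mpr ha⟩

variable {f g : M →ₗ[K] N}

theorem LinearMap.mem_span_singleton_of_forall_not_linearIndependent [NeZero (2 : K)]
    (hfg : ∀ v, ¬ LinearIndependent K ![f v, g v]) {v₀ : M} (hf : f v₀ ≠ 0) (hg : g v₀ = 0)
    (w : M) : g w ∈ K ∙ f v₀ := by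
  by_cases hw : g w = 0
  · simp [hw]
  obtain ⟨a, ha⟩ := exists_smul_eq_of_not_linearIndependent_pair (hfg (v₀ + w)) (by simpa [hg])
  obtain ⟨b, hb⟩ := exists_smul_eq_of_not_linearIndependent_pair (hfg (v₀ - w)) (by simpa [hg])
  simp only [map_add, map_sub, hg, zero_add, zero_sub, smul_neg] at ha hb
  have hsum : (a - b) • g w = (2 : K) • f v₀ := by
    rw [sub_smul, two_smul]; linear_combination (norm := module) ha + hb
  have hab : a - b ≠ 0 := by
    rintro h
    rw [h, zero_smul, eq_comm, smul_eq_zero] at hsum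
    exact hsum.elim two_ne_zero hf
  exact mem_span_singleton.mpr ⟨(a - b)⁻¹ * 2, by rw [mul_smul, ← hsum, inv_smul_smul₀ hab]⟩

theorem LinearMap.range_le_of_forall_not_linearIndependent
    (hfg : ∀ v, ¬ LinearIndependent K ![f v, g v]) (hg : g ≠ 0) {p : Submodule K N}
    (hp : range g ≤ p) : range f ≤ p := by
  have hmem : ∀ w, g w ≠ 0 → f w ∈ p := fun w hw => by
    obtain ⟨a, ha⟩ := exists_smul_eq_of_not_linearIndependent_pair (hfg w) hw
    exact ha ▸ p.smul_mem a (hp (mem_range_self g w))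
  obtain ⟨w₁, hw₁⟩ : ∃ w, g w ≠ 0 := by
    by_contra! h
    exact hg (LinearMap.ext h)
  rintro _ ⟨w, rfl⟩
  by_cases hw : g w = 0
  · simpa using p.sub_mem (hmem (w + w₁) (by simpa [hw])) (hmem w₁ hw₁)
  · exact hmem w hw

theorem LinearMap.exists_range_le_span_singleton_of_forall_not_linearIndependent
    [NeZero (2 : K)] (hfg : LinearIndependent K ![f, g])
    (hpt : ∀ v, ¬ LinearIndependent K ![f v, g v]) :
    ∃ u : N, range f ≤ K ∙ u ∧ range g ≤ K ∙ u := by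
  obtain ⟨v₀, hv₀⟩ : ∃ v, f v ≠ 0 := by
    by_contra! h
    exact hfg.ne_zero 0 (LinearMap.ext h)
  obtain ⟨l, hl⟩ : ∃ l : K, l • f v₀ = g v₀ := by
    simpa [LinearIndependent.pair_iff' hv₀] using hpt v₀
  set g' := -l • f + g
  have hpt' : ∀ v, ¬ LinearIndependent K ![f v, g' v] := by
    simpa only [g', LinearMap.add_apply, LinearMap.smul_apply,
      LinearIndependent.pair_add_smul_right_iff] using hpt
  have hg'ne : g' ≠ 0 := by
    intro h
    exact one_ne_zero (LinearIndependent.pair_iff.mp hfg (-l) 1 (by simpa [g'] using h)).2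
  have hg' : range g' ≤ K ∙ f v₀ := by
    rintro _ ⟨w, rfl⟩
    exact mem_span_singleton_of_forall_not_linearIndependent hpt' hv₀ (by simp [g', hl]) w
  have hf := range_le_of_forall_not_linearIndependent hpt' hg'ne hg'
  refine ⟨f v₀, hf, ?_⟩
  rintro _ ⟨w, rfl⟩
  have hgw : g w = g' w + l • f w := by simp [g']
  rw [hgw]
  exact add_mem (hg' (mem_range_self g' w)) (smul_mem _ l (hf (mem_range_self f w)))

end LocallyDependent

theorem Matrix.IsHermitian.exists_eq_smul_vecMulVec_of_range_le {K ι : Type*} [Field K]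
    [StarRing K] [Fintype ι] [DecidableEq ι] {A : Matrix ι ι K} (hA : A.IsHermitian) {u : ι → K}
    (h : LinearMap.range A.mulVecLin ≤ K ∙ u) : ∃ c : K, A = c • vecMulVec u (star u) := by
  have hcol : ∀ j, ∃ c : K, ∀ i, A i j = c * u i := fun j => by
    obtain ⟨c, hc⟩ := mem_span_singleton.mp (h (LinearMap.mem_range_self _ (Pi.single j 1)))
    exact ⟨c, fun i => by simpa [mulVec_single_one] using (congrFun hc i).symm⟩
  choose c hc using hcol
  by_cases hu : u = 0
  · exact ⟨0, by ext i j; simp [hc, hu]⟩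
  obtain ⟨i₀, hi₀⟩ : ∃ i, u i ≠ 0 := Function.ne_iff.mp hu
  refine ⟨star (c i₀) / u i₀, ?_⟩
  ext i j
  have hj : c j * u i₀ = star (c i₀) * star (u j) := by
    rw [← hc, ← hA.apply i₀ j, hc, star_mul']
  simp only [smul_apply, vecMulVec_apply, Pi.star_apply, smul_eq_mul, hc]
  field_simp
  linear_combination u i * hj

theorem not_linearIndependent_real_of_isSelfAdjoint {E : Type*} [AddCommGroup E] [Module ℂ E]
    [StarAddMonoid E] [StarModule ℂ E] [Module ℝ E] [IsScalarTower ℝ ℂ E] {x y : E}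
    (hx : IsSelfAdjoint x) (hy : IsSelfAdjoint y) (h : ¬ LinearIndependent ℂ ![x, y]) :
    ¬ LinearIndependent ℝ ![x, y] := by
  contrapose! h
  rw [LinearIndependent.pair_iff] at h ⊢
  intro s t hst
  have hconj : star s • x + star t • y = 0 := by
    simpa [star_smul, hx.star_eq, hy.star_eq] using congrArg star hst
  have hre : ∀ (z : ℂ) (e : E), (2 * z.re) • e = (z + star z) • e := fun z e => by
    rw [← algebraMap_smul ℂ, Complex.coe_algebraMap, Complex.star_def, Complex.add_conj]
  have him : ∀ (z : ℂ) (e : E), (2 * z.im) • e = (-Complex.I * (z - star z)) • e := fun z e => by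
    rw [← algebraMap_smul ℂ, Complex.coe_algebraMap, Complex.star_def, Complex.sub_conj]
    push_cast; ring_nf; simp [Complex.I_sq]
  obtain ⟨hs, ht⟩ := h (2 * s.re) (2 * t.re) (by
    rw [hre, hre]
    linear_combination (norm := module) hst + hconj)
  obtain ⟨hs', ht'⟩ := h (2 * s.im) (2 * t.im) (by
    rw [him, him]
    linear_combination (norm := module) (-Complex.I) • (hst - hconj))
  exact ⟨Complex.ext (by simpa using hs) (by simpa using hs'),
    Complex.ext (by simpa using ht) (by simpa using ht')⟩

/-- For two Hermitian matrices (case `d = 2`), conditions (a) and (f) are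
equivalent: `A₁, A₂` are linearly independent over ℝ iff there exists a
vector `V` with `A₁V, A₂V` linearly independent over ℂ. -/
theorem condition_a_iff_condition_f_of_two (n : ℕ)
    (A₁ A₂ : Matrix (Fin n) (Fin n) ℂ)
    (h₁ : A₁.IsHermitian) (h₂ : A₂.IsHermitian) :
    LinearIndependent ℝ ![A₁, A₂] ↔
      ∃ V : Fin n → ℂ, LinearIndependent ℂ ![A₁.mulVec V, A₂.mulVec V] := by
  constructor
  · intro hR
    by_contra! hpt
    have hC : LinearIndependent ℂ ![A₁, A₂] := by
      by_contra hC
      exact not_linearIndependent_real_of_isSelfAdjoint h₁ h₂ hC hR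
    have hlin : LinearIndependent ℂ ![A₁.mulVecLin, A₂.mulVecLin] := by
      rw [LinearIndependent.pair_iff] at hC ⊢
      exact fun s t hst => hC s t (toLin'.injective (by simpa [toLin'_apply'] using hst))
    obtain ⟨u, hu₁, hu₂⟩ :=
      LinearMap.exists_range_le_span_singleton_of_forall_not_linearIndependent hlin hpt
    obtain ⟨c₁, rfl⟩ := h₁.exists_eq_smul_vecMulVec_of_range_le hu₁
    obtain ⟨c₂, rfl⟩ := h₂.exists_eq_smul_vecMulVec_of_range_le hu₂
    exact not_linearIndependent_pair_smul c₁ c₂ _ hC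
  · rintro ⟨V, hV⟩
    refine (LinearIndependent.of_comp ((mulVecBilin ℂ ℂ).flip V) ?_).restrict_scalars' ℝ
    convert hV using 1
    ext i : 1; fin_cases i <;> rfl
end

section
/- The four Hermitian matrices A₁ = I₄, A₂ = diag(1,0,0,0), A₃ = diag(0,1,0,0), and A₄ with A₄ having entries (A₄)₁₁ = 1, (A₄)₁₂ = (A₄)₂₁ = 1/2, all other entries zero, are linearly independent over ℝ and satisfy ∩ⱼ Ker Aⱼ = {0}, yet there is no vector V ∈ ℂ⁴ for which A₁V, A₂V, A₃V, A₄V are linearly independent over ℂ. -/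
open Matrix

/-- The four Hermitian matrices `A₁ = I₄`, `A₂ = diag(1,0,0,0)`,
`A₃ = diag(0,1,0,0)` and `A₄ = !![1,1/2,0,0; 1/2,0,0,0; 0,0,0,0; 0,0,0,0]`
are linearly independent over ℝ and have trivial common kernel, yet there is
no vector `V ∈ ℂ⁴` such that `A₁V, A₂V, A₃V, A₄V` are linearly independent
over ℂ. -/
theorem beloshapka_nondegenerate_not_fully (A : Fin 4 → Matrix (Fin 4) (Fin 4) ℂ)
    (hA0 : A 0 = 1)
    (hA1 : A 1 = Matrix.diagonal ![1, 0, 0, 0])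
    (hA2 : A 2 = Matrix.diagonal ![0, 1, 0, 0])
    (hA3 : A 3 = !![1, 1/2, 0, 0; 1/2, 0, 0, 0; 0, 0, 0, 0; 0, 0, 0, 0]) :
    LinearIndependent ℝ A ∧
      (∀ v : Fin 4 → ℂ, (∀ j, (A j).mulVec v = 0) → v = 0) ∧
      ¬ ∃ V : Fin 4 → ℂ, LinearIndependent ℂ (fun j => (A j).mulVec V) := by
  refine ⟨?_, ?_, ?_⟩
  · rw [Fintype.linearIndependent_iff]
    intro c hc
    have h := fun i j => congrFun (congrFun hc i) j
    have h22 := h 2 2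
    have h00 := h 0 0
    have h11 := h 1 1
    have h01 := h 0 1
    simp [Fin.sum_univ_four, hA0, hA1, hA2, hA3, Matrix.one_apply, diagonal,
      Matrix.vecHead, Matrix.vecTail] at h22 h00 h11 h01
    have hc0 : c 0 = 0 := by exact_mod_cast h22
    have hc00 : c 0 + c 1 + c 3 = 0 := by exact_mod_cast h00
    have hc11 : c 0 + c 2 = 0 := by exact_mod_cast h11
    intro i; fin_cases i
    · exact hc0
    · show c 1 = 0; linarith
    · show c 2 = 0; linarith
    · exact h01
  · intro v h
    have := h 0
    rwa [hA0, one_mulVec] at this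
  · rintro ⟨V, hV⟩
    have h1 : (A 1).mulVec V = ![V 0, 0, 0, 0] := by
      rw [hA1]; funext i; fin_cases i <;>
        simp [mulVec, dotProduct, Fin.sum_univ_four, diagonal, Matrix.vecHead, Matrix.vecTail]
    have h2 : (A 2).mulVec V = ![0, V 1, 0, 0] := by
      rw [hA2]; funext i; fin_cases i <;>
        simp [mulVec, dotProduct, Fin.sum_univ_four, diagonal, Matrix.vecHead, Matrix.vecTail]
    have h3 : (A 3).mulVec V = ![V 0 + V 1 / 2, V 0 / 2, 0, 0] := by
      rw [hA3]; funext i; fin_cases i <;>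
        simp [mulVec, dotProduct, Fin.sum_univ_four, Matrix.vecHead, Matrix.vecTail] <;> ring
    by_cases hv0 : V 0 = 0
    · exact hV.ne_zero 1 (by rw [h1, hv0]; funext i; fin_cases i <;> simp)
    by_cases hv1 : V 1 = 0
    · exact hV.ne_zero 2 (by rw [h2, hv1]; funext i; fin_cases i <;> simp)
    have key := Fintype.linearIndependent_iff.mp hV
      ![0, -(V 0 + V 1 / 2) / V 0, -(V 0) / (2 * V 1), 1] ?_ 3
    · simp at key
    · funext i
      simp only [Fin.sum_univ_four]
      fin_cases i <;>
        simp [h1, h2, h3, Matrix.vecHead, Matrix.vecTail] <;> field_simp <;> ring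
end

section
/- The winding number around the origin of ζ ↦ det(−G(ζ)̄⁻¹ G(ζ)), for G(ζ) the upper block-triangular (2n+2d)×(2n+2d) matrix with diagonal blocks ½I_d, G₂(ζ) = [[ζAᵗ, Iₙ],[iζAᵗ, −iIₙ]], and −iζI_d, equals 2n + 2d. -/
open Matrix

/-! On the unit circle `conj ζ = ζ⁻¹`, so `det (-Ḡ⁻¹ G) = det G / conj (det G)` (the sign `(-1)^(2n+2d)`
is trivial) and every factor `ζ` of `det G` contributes `ζ²`. Since `G` is block triangular,
`det G = (1/2)^d · det G₂(ζ) · (-iζ)^d`, and eliminating the lower-left block of `G₂(ζ)`, which is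
`i` times the upper-left one, gives `det G₂(ζ) = (-2i)^n det A · ζ^n`. Hence
`det (-Ḡ⁻¹ G) = (k / conj k) ζ^(2n+2d)` with `k ≠ 0` because `A` is invertible. -/

theorem Matrix.det_fromBlocks_smul_left₂₁ {m R : Type*} [Fintype m] [DecidableEq m] [CommRing R]
    (P B D : Matrix m m R) (a : R) :
    (fromBlocks P B (a • P) D).det = P.det * (D - a • B).det := by
  have hrow : fromBlocks 1 0 (-a • 1) 1 * fromBlocks P B (a • P) D
      = fromBlocks P B 0 (D - a • B) := by
    simp only [fromBlocks_multiply, Matrix.one_mul, Matrix.zero_mul, add_zero, Matrix.smul_mul]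
    congr 1 <;> module
  have := congrArg det hrow
  rwa [det_mul, det_fromBlocks_zero₁₂, det_one, one_mul, one_mul,
    det_fromBlocks_zero₂₁] at this

theorem Matrix.det_neg_inv_map_mul {ι K : Type*} [Fintype ι] [DecidableEq ι] [Field K]
    (σ : K →+* K) (M : Matrix ι ι K) :
    (-((M.map σ)⁻¹ * M)).det = (-1) ^ Fintype.card ι * (M.det / σ M.det) := by
  rw [det_neg, det_mul, det_nonsing_inv, Ring.inverse_eq_inv', ← RingHom.mapMatrix_apply,
    ← RingHom.map_det, div_eq_inv_mul]

theorem det_G₂ {n : ℕ} (A : Matrix (Fin n) (Fin n) ℂ) (ζ : ℂ) :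
    (fromBlocks (ζ • A.transpose) (1 : Matrix (Fin n) (Fin n) ℂ)
      ((Complex.I * ζ) • A.transpose) ((-Complex.I) • (1 : Matrix (Fin n) (Fin n) ℂ))).det
    = (-2 * Complex.I) ^ n * A.det * ζ ^ n := by
  rw [mul_smul, det_fromBlocks_smul_left₂₁, ← sub_smul, det_smul, det_smul, det_transpose,
    det_one, Fintype.card_fin]
  ring

/-- Maslov index computation: for `G(ζ)` the upper block-triangular matrix of
size `2n+2d` with diagonal blocks `½I_d`, `G₂(ζ) = [[ζAᵗ, Iₙ],[iζAᵗ, −iIₙ]]`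
and `−iζ I_d` (and arbitrary upper off-diagonal blocks `B(ζ)`, `C(ζ)`), the
function `ζ ↦ det(−G(ζ)̄⁻¹ G(ζ))` on the unit circle equals `c₀ ζ^(2n+2d)`
for some nonzero constant `c₀`; hence its winding number around the origin is
`2n + 2d`. -/
theorem maslov_index_eq (n d : ℕ)
    (A : Matrix (Fin n) (Fin n) ℂ) (hA : IsUnit A)
    (B : ℂ → Matrix (Fin d) ((Fin n ⊕ Fin n) ⊕ Fin d) ℂ)
    (C : ℂ → Matrix (Fin n ⊕ Fin n) (Fin d) ℂ)
    (G : ℂ → Matrix (Fin d ⊕ ((Fin n ⊕ Fin n) ⊕ Fin d))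
                    (Fin d ⊕ ((Fin n ⊕ Fin n) ⊕ Fin d)) ℂ)
    (hG : ∀ ζ, G ζ = Matrix.fromBlocks
        ((1 / 2 : ℂ) • (1 : Matrix (Fin d) (Fin d) ℂ)) (B ζ) 0
        (Matrix.fromBlocks
          (Matrix.fromBlocks (ζ • A.transpose) (1 : Matrix (Fin n) (Fin n) ℂ)
            ((Complex.I * ζ) • A.transpose)
            ((-Complex.I) • (1 : Matrix (Fin n) (Fin n) ℂ)))
          (C ζ) 0 ((-Complex.I * ζ) • (1 : Matrix (Fin d) (Fin d) ℂ)))) :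
    ∃ c₀ : ℂ, c₀ ≠ 0 ∧ ∀ ζ : ℂ, ‖ζ‖ = 1 →
      Matrix.det (-(((G ζ).map (starRingEnd ℂ))⁻¹ * G ζ)) =
        c₀ * ζ ^ (2 * n + 2 * d) := by
  set k : ℂ := (1 / 2) ^ d * ((-2 * Complex.I) ^ n * A.det) * (-Complex.I) ^ d
  have hk : k ≠ 0 := by
    have : A.det ≠ 0 := ((isUnit_iff_isUnit_det A).mp hA).ne_zero
    simp [k, this, Complex.I_ne_zero]
  have hdetG (ζ : ℂ) : (G ζ).det = k * ζ ^ (n + d) := by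
    rw [hG, det_fromBlocks_zero₂₁, det_fromBlocks_zero₂₁, det_G₂, det_smul, det_smul]
    simp only [det_one, Fintype.card_fin, mul_one, k]
    ring
  refine ⟨k / starRingEnd ℂ k, div_ne_zero hk ((map_ne_zero _).mpr hk), fun ζ hζ => ?_⟩
  have hζ₀ : ζ ≠ 0 := by rintro rfl; simp at hζ
  have hcard : Fintype.card (Fin d ⊕ ((Fin n ⊕ Fin n) ⊕ Fin d)) = 2 * (n + d) := by
    simp only [Fintype.card_sum, Fintype.card_fin]; ring
  rw [det_neg_inv_map_mul, hdetG, map_mul, map_pow, ← Complex.inv_eq_conj hζ, hcard, pow_mul,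
    neg_one_sq, one_pow, one_mul, inv_pow]
  field_simp
  ring
end
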